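/- Let α > 0, κ > 0, β, η ∈ ℝ, a ∈ [0,1] with αa < 1, let g(d) = log(1 + αd) + (καd² − (β+η)d)/(1 + αd) on [−a, 1−a], and let d* be the optimal coordinate increment of Theorem 1 (d* = min{max{d̂,−a},1−a} if 4κ(κ+β+η)+α² > 0 with d̂ = (−α−2κ+√(4κ(κ+β+η)+α²))/(2κα), and d* = −a otherwise). Then g is monotone along the segment from 0 to d* in the direction of the update: if d* ≥ 0 then g is monotone nonincreasing on [0, d*], and if d* ≤ 0 then g is monotone nondecreasing on [d*, 0]; in particular g(d*) ≤ g(0). -/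

import Mathlib

/-!
Writing `u(d) = 2κ(1 + αd) + α` and `Δ = 4κ(κ + β + η) + α²`, the derivative of `g` is
`(u(d)² - Δ) / (4κ(1 + αd)²)`. On the domain `1 + αd > 0` we have `u(d) > 0`, so `g' ≤ 0` exactly
where `u(d) ≤ √Δ`, i.e. left of the stationary point `d̂`, and `g' ≥ 0` right of it. The clipped
update `d*` lies on the same side of `d̂` as `0` (or the segment between them is a point), so `g`
moves monotonically from `0` to `d*`. When `Δ ≤ 0` the whole domain lies right of `d̂`, since
then `√Δ = 0`.
-/

namespace RicianMLE

open Set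

variable {α κ β η : ℝ}

noncomputable def increment (α κ β η d : ℝ) : ℝ :=
  Real.log (1 + α * d) + (κ * α * d ^ 2 - (β + η) * d) / (1 + α * d)

def discr (α κ β η : ℝ) : ℝ := 4 * κ * (κ + β + η) + α ^ 2

noncomputable def criticalPoint (α κ β η : ℝ) : ℝ :=
  (-α - 2 * κ + Real.sqrt (discr α κ β η)) / (2 * κ * α)

noncomputable def incrementDeriv (α κ β η d : ℝ) : ℝ :=
  ((2 * κ * (1 + α * d) + α) ^ 2 - discr α κ β η) / (4 * κ * (1 + α * d) ^ 2)

theorem hasDerivAt_increment (hκ : 0 < κ) {d : ℝ} (hd : 0 < 1 + α * d) :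
    HasDerivAt (increment α κ β η) (incrementDeriv α κ β η d) d := by
  have hlin : HasDerivAt (fun x => 1 + α * x) α d := by
    simpa using ((hasDerivAt_id d).const_mul α).const_add 1
  have hnum : HasDerivAt (fun x => κ * α * x ^ 2 - (β + η) * x)
      (κ * α * (2 * d) - (β + η)) d := by
    simpa using ((hasDerivAt_pow 2 d).const_mul (κ * α)).fun_sub ((hasDerivAt_id d).const_mul (β + η))
  refine ((hlin.log hd.ne').add (hnum.div hlin hd.ne')).congr_deriv ?_
  unfold incrementDeriv discr
  field_simp
  ring

theorem le_criticalPoint_iff (hα : 0 < α) (hκ : 0 < κ) {d : ℝ} :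
    d ≤ criticalPoint α κ β η ↔ 2 * κ * (1 + α * d) + α ≤ Real.sqrt (discr α κ β η) := by
  rw [criticalPoint, le_div_iff₀ (by positivity)]
  constructor <;> intro h <;> linarith

theorem criticalPoint_le_iff (hα : 0 < α) (hκ : 0 < κ) {d : ℝ} :
    criticalPoint α κ β η ≤ d ↔ Real.sqrt (discr α κ β η) ≤ 2 * κ * (1 + α * d) + α := by
  rw [criticalPoint, div_le_iff₀ (by positivity)]
  constructor <;> intro h <;> linarith

theorem incrementDeriv_nonpos (hα : 0 < α) (hκ : 0 < κ) {d : ℝ} (hd : 0 < 1 + α * d)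
    (h : d ≤ criticalPoint α κ β η) : incrementDeriv α κ β η d ≤ 0 := by
  rw [le_criticalPoint_iff hα hκ, Real.le_sqrt' (by positivity)] at h
  exact div_nonpos_of_nonpos_of_nonneg (by linarith) (by positivity)

theorem incrementDeriv_nonneg (hα : 0 < α) (hκ : 0 < κ) {d : ℝ} (hd : 0 < 1 + α * d)
    (h : criticalPoint α κ β η ≤ d) : 0 ≤ incrementDeriv α κ β η d := by
  rw [criticalPoint_le_iff hα hκ, Real.sqrt_le_left (by positivity)] at h
  exact div_nonneg (by linarith) (by positivity)

theorem criticalPoint_lt_of_discr_nonpos (hα : 0 < α) (hκ : 0 < κ)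
    (hΔ : discr α κ β η ≤ 0) {d : ℝ} (hd : 0 < 1 + α * d) :
    criticalPoint α κ β η < d := by
  rw [← not_le, le_criticalPoint_iff hα hκ, Real.sqrt_eq_zero'.mpr hΔ]
  nlinarith

theorem antitoneOn_increment (hα : 0 < α) (hκ : 0 < κ) {l r : ℝ} (hl : 0 < 1 + α * l)
    (hr : r ≤ criticalPoint α κ β η) : AntitoneOn (increment α κ β η) (Icc l r) := by
  have hdom : ∀ x ∈ Icc l r, 0 < 1 + α * x := fun x hx => by nlinarith [hx.1]
  refine antitoneOn_of_hasDerivWithinAt_nonpos (convex_Icc l r)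
    (fun x hx => (hasDerivAt_increment hκ (hdom x hx)).continuousAt.continuousWithinAt)
    (fun x hx => (hasDerivAt_increment hκ (hdom x (interior_subset hx))).hasDerivWithinAt)
    fun x hx => ?_
  rw [interior_Icc] at hx
  exact incrementDeriv_nonpos hα hκ (hdom x (Ioo_subset_Icc_self hx)) (hx.2.le.trans hr)

theorem monotoneOn_increment (hα : 0 < α) (hκ : 0 < κ) {l r : ℝ} (hl : 0 < 1 + α * l)
    (hr : criticalPoint α κ β η ≤ l) : MonotoneOn (increment α κ β η) (Icc l r) := by
  have hdom : ∀ x ∈ Icc l r, 0 < 1 + α * x := fun x hx => by nlinarith [hx.1]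
  refine monotoneOn_of_hasDerivWithinAt_nonneg (convex_Icc l r)
    (fun x hx => (hasDerivAt_increment hκ (hdom x hx)).continuousAt.continuousWithinAt)
    (fun x hx => (hasDerivAt_increment hκ (hdom x (interior_subset hx))).hasDerivWithinAt)
    fun x hx => ?_
  rw [interior_Icc] at hx
  exact incrementDeriv_nonneg hα hκ (hdom x (Ioo_subset_Icc_self hx)) (hr.trans hx.1.le)

end RicianMLE

open RicianMLE

theorem stmt_5 (α κ β η a : ℝ) (hα : 0 < α) (hκ : 0 < κ)
    (ha : a ∈ Set.Icc (0 : ℝ) 1) (haa : α * a < 1) :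
    let g : ℝ → ℝ := fun d => Real.log (1 + α * d) + (κ * α * d ^ 2 - (β + η) * d) / (1 + α * d)
    let dstar : ℝ :=
      if 0 < 4 * κ * (κ + β + η) + α ^ 2 then
        min (max ((-α - 2 * κ + Real.sqrt (4 * κ * (κ + β + η) + α ^ 2)) / (2 * κ * α)) (-a))
          (1 - a)
      else -a
    (0 ≤ dstar → AntitoneOn g (Set.Icc 0 dstar)) ∧
      (dstar ≤ 0 → MonotoneOn g (Set.Icc dstar 0)) ∧
      g dstar ≤ g 0 := by
  intro g dstar
  change (0 ≤ dstar → AntitoneOn (increment α κ β η) _) ∧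
    (dstar ≤ 0 → MonotoneOn (increment α κ β η) _) ∧ increment α κ β η dstar ≤ increment α κ β η 0
  obtain ⟨ha0, ha1⟩ := ha
  have hdom : ∀ x, -a ≤ x → 0 < 1 + α * x := fun x hx => by nlinarith
  set c := criticalPoint α κ β η
  have hdstar : -a ≤ dstar ∧ (dstar ≤ c ∨ dstar ≤ -a) ∧ (c ≤ dstar ∨ 1 - a ≤ dstar) := by
    by_cases hΔ : 0 < 4 * κ * (κ + β + η) + α ^ 2
    · have : dstar = min (max c (-a)) (1 - a) := if_pos hΔ
      rw [this]
      grind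
    · have : dstar = -a := if_neg hΔ
      rw [this]
      exact ⟨le_rfl, Or.inr le_rfl,
        Or.inl (criticalPoint_lt_of_discr_nonpos hα hκ (not_lt.mp hΔ) (hdom _ le_rfl)).le⟩
  obtain ⟨hlow, hleft, hright⟩ := hdstar
  have hanti : 0 ≤ dstar → AntitoneOn (increment α κ β η) (Set.Icc 0 dstar) := fun h =>
    hleft.elim (antitoneOn_increment hα hκ (by simp))
      fun h' => (Set.subsingleton_Icc_of_ge (by linarith)).antitoneOn _
  have hmono : dstar ≤ 0 → MonotoneOn (increment α κ β η) (Set.Icc dstar 0) := fun h =>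
    hright.elim (monotoneOn_increment hα hκ (hdom _ hlow))
      fun h' => (Set.subsingleton_Icc_of_ge (by linarith)).monotoneOn _
  refine ⟨hanti, hmono, ?_⟩
  rcases le_total 0 dstar with h | h
  · exact hanti h (Set.left_mem_Icc.mpr h) (Set.right_mem_Icc.mpr h) h
  · exact hmono h (Set.left_mem_Icc.mpr h) (Set.right_mem_Icc.mpr h) h
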